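/- Let k ≥ 2 be an integer, let R > 0 be real, and let x be a nonzero real number with |x| ≥ R/sin(π/(2k)). Then for every complex number z with |z| ≤ R, the real part of −sgn(x)^k/(x − z)^k is at most 0, where sgn(x) is the sign of x (equal to 1 if x > 0 and −1 if x < 0). Moreover, for z = 0 the real part of −sgn(x)^k/x^k is strictly negative. -/

import Mathlib

/-!
Put `ε = sgn x` and `w = ε (x - z) = |x| - ε z`; since `ε⁻¹ = ε`, the quantity is `-(w ^ k)⁻¹`,
whose real part has the sign of `-Re (w ^ k)`. The point `w` lies in the disc of radius
`R ≤ |x| sin θ` about `|x|`, `θ = π / (2k)`, and such a disc sits inside the sector `|arg w| ≤ θ`: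
the identity `Im ((X - w) w̄) = -X Im w` gives `X |Im w| ≤ |w - X| |w|`. Hence `k |arg w| ≤ π / 2`
and `Re (w ^ k) = |w| ^ k cos (k arg w) ≥ 0`.
-/

open Complex ComplexConjugate

namespace Complex

theorem abs_mul_abs_im_le_norm_sub_mul_norm (X : ℝ) (w : ℂ) :
    |X| * |w.im| ≤ ‖w - X‖ * ‖w‖ := by
  have him : ((X - w) * conj w).im = -(X * w.im) := by
    simp only [mul_im, sub_re, sub_im, ofReal_re, ofReal_im, conj_re, conj_im]; ring
  calc |X| * |w.im| = |((X - w) * conj w).im| := by rw [him, abs_neg, abs_mul]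
    _ ≤ ‖(X - w) * conj w‖ := abs_im_le_norm _
    _ = ‖w - X‖ * ‖w‖ := by rw [norm_mul, norm_conj, norm_sub_rev]

theorem abs_arg_le_of_abs_im_le {w : ℂ} {θ : ℝ} (hθ : θ ∈ Set.Icc 0 (Real.pi / 2))
    (hre : 0 ≤ w.re) (him : |w.im| ≤ Real.sin θ * ‖w‖) : |arg w| ≤ θ := by
  have hsin : 0 ≤ Real.sin θ :=
    Real.sin_nonneg_of_nonneg_of_le_pi hθ.1 (by linarith [hθ.2, Real.pi_pos])
  have ht : |w.im / ‖w‖| ≤ Real.sin θ := by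
    rw [abs_div, abs_norm]
    exact div_le_of_le_mul₀ (norm_nonneg _) hsin him
  have ht1 : w.im / ‖w‖ ∈ Set.Icc (-1 : ℝ) 1 := abs_le.1 (ht.trans (Real.sin_le_one θ))
  rw [arg_of_re_nonneg hre, abs_le]
  constructor
  · rw [Real.le_arcsin_iff_sin_le ⟨by linarith [hθ.2], by linarith [hθ.1, Real.pi_pos]⟩ ht1,
      Real.sin_neg]
    exact neg_le_of_abs_le ht
  · rw [Real.arcsin_le_iff_le_sin ht1 ⟨by linarith [hθ.1, Real.pi_pos], hθ.2⟩]
    exact le_of_abs_le ht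

theorem abs_arg_le_of_norm_sub_le {w : ℂ} {X θ : ℝ} (hX : 0 < X)
    (hθ : θ ∈ Set.Icc 0 (Real.pi / 2)) (hw : ‖w - X‖ ≤ X * Real.sin θ) : |arg w| ≤ θ := by
  refine abs_arg_le_of_abs_im_le hθ ?_ ?_
  · have hre : X - w.re ≤ ‖w - X‖ := by
      simpa using (neg_le_abs (w - X).re).trans (abs_re_le_norm (w - X))
    nlinarith [Real.sin_le_one θ]
  · refine le_of_mul_le_mul_left ?_ hX
    calc X * |w.im| ≤ ‖w - X‖ * ‖w‖ := by
          simpa [abs_of_pos hX] using abs_mul_abs_im_le_norm_sub_mul_norm X w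
      _ ≤ X * (Real.sin θ * ‖w‖) := by
          rw [← mul_assoc]; exact mul_le_mul_of_nonneg_right hw (norm_nonneg w)

theorem re_pow_nonneg_of_mul_abs_arg_le {w : ℂ} {k : ℕ} (h : k * |arg w| ≤ Real.pi / 2) :
    0 ≤ (w ^ k).re := by
  have hre : (w ^ k).re = ‖w‖ ^ k * Real.cos (k * arg w) := by
    conv_lhs => rw [← norm_mul_cos_add_sin_mul_I w]
    rw [mul_pow, cos_add_sin_mul_I_pow, ← ofReal_pow, re_ofReal_mul]
    simp [← ofReal_natCast, ← ofReal_mul, ← ofReal_cos, ← ofReal_sin]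
  have hk : 0 ≤ (k : ℝ) * |arg w| := by positivity
  rw [hre, ← Real.cos_abs, abs_mul, Nat.abs_cast]
  exact mul_nonneg (by positivity)
    (Real.cos_nonneg_of_neg_pi_div_two_le_of_le (by linarith [Real.pi_pos]) h)

end Complex

theorem Real.sign_mul_self_eq_abs (x : ℝ) : Real.sign x * x = |x| := by
  rcases lt_trichotomy x 0 with h | rfl | h
  · rw [Real.sign_of_neg h, abs_of_neg h, neg_one_mul]
  · simp
  · rw [Real.sign_of_pos h, abs_of_pos h, one_mul]

theorem sign_pow_div_sub_pow (x : ℝ) (z : ℂ) (k : ℕ) :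
    (Real.sign x : ℂ) ^ k / (x - z) ^ k = ((|x| - Real.sign x * z) ^ k)⁻¹ := by
  rw [← div_pow, ← inv_pow, ← Real.sign_mul_self_eq_abs, ofReal_mul, ← mul_sub, mul_inv,
    ← ofReal_inv, Real.inv_sign, div_eq_mul_inv]

theorem stmt11_general (k : ℕ) (hk : 2 ≤ k) (R : ℝ) (x : ℝ) (hx : x ≠ 0)
    (hxR : R / Real.sin (Real.pi / (2 * k)) ≤ |x|) :
    (∀ z : ℂ, ‖z‖ ≤ R →
      (-((Real.sign x : ℂ) ^ k) / ((x : ℂ) - z) ^ k).re ≤ 0) ∧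
    ((-((Real.sign x : ℂ) ^ k) / (x : ℂ) ^ k).re < 0) := by
  set θ := Real.pi / (2 * k)
  have hk0 : (0 : ℝ) < k := by exact_mod_cast (show 0 < k by omega)
  have hkθ : k * θ = Real.pi / 2 := by simp only [θ]; field_simp
  have hθ : θ ∈ Set.Icc 0 (Real.pi / 2) := by
    constructor <;> nlinarith [Real.pi_pos, show (1 : ℝ) ≤ k by exact_mod_cast (by omega : 1 ≤ k)]
  have hsin : 0 < Real.sin θ :=
    Real.sin_pos_of_pos_of_lt_pi (by positivity) (by linarith [hθ.2, Real.pi_pos])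
  have hR : R ≤ |x| * Real.sin θ := (div_le_iff₀ hsin).1 hxR
  refine ⟨fun z hz => ?_, ?_⟩
  · rw [neg_div, sign_pow_div_sub_pow, neg_re, inv_re, neg_nonpos]
    refine div_nonneg (re_pow_nonneg_of_mul_abs_arg_le ?_) (normSq_nonneg _)
    have harg : |arg (|x| - Real.sign x * z)| ≤ θ := by
      refine abs_arg_le_of_norm_sub_le (abs_pos.2 hx) hθ ?_
      have hsign : |Real.sign x| = 1 := by
        rcases Real.sign_apply_eq_of_ne_zero x hx with h | h <;> simp [h]
      simpa [norm_mul, hsign] using hz.trans hR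
    calc (k : ℝ) * |arg _| ≤ k * θ := mul_le_mul_of_nonneg_left harg hk0.le
      _ = Real.pi / 2 := hkθ
  · have h0 := sign_pow_div_sub_pow x 0 k
    rw [sub_zero, mul_zero, sub_zero] at h0
    rw [neg_div, h0, neg_re, ← ofReal_pow, ← ofReal_inv, ofReal_re, neg_neg_iff_pos]
    exact inv_pos.2 (pow_pos (abs_pos.2 hx) k)

/-- For `k ≥ 2`, `R > 0` and a nonzero real `x` with `|x| ≥ R·csc(π/(2k))`,
the real part of `-sgn(x)^k/(x - z)^k` is nonpositive for every `z` with `|z| ≤ R`,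
and strictly negative for `z = 0`. -/
theorem stmt11 (k : ℕ) (hk : 2 ≤ k) (R : ℝ) (hR : 0 < R) (x : ℝ) (hx : x ≠ 0)
    (hxR : R / Real.sin (Real.pi / (2 * k)) ≤ |x|) :
    (∀ z : ℂ, ‖z‖ ≤ R →
      (-((Real.sign x : ℂ) ^ k) / ((x : ℂ) - z) ^ k).re ≤ 0) ∧
    ((-((Real.sign x : ℂ) ^ k) / (x : ℂ) ^ k).re < 0) :=
  stmt11_general k hk R x hx hxR
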